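/- Let d > 1 be an integer and let p be an integer with 1 ≤ p ≤ d - 1. Then E_DS[p,d] / (2p) > E_DS[p+1,d] / (2(p+1)); that is, the expected decrease per function evaluation of the direct-search iteration is strictly decreasing in the subspace dimension p. -/

import Mathlib

open MeasureTheory Real
open scoped Pointwise

noncomputable def sphereUniform (d : ℕ) :
    Measure (Metric.sphere (0 : EuclideanSpace ℝ (Fin d)) 1) :=
  ((volume : Measure (EuclideanSpace ℝ (Fin d))).toSphere Set.univ)⁻¹ •
    (volume : Measure (EuclideanSpace ℝ (Fin d))).toSphere

/-- `E_DS[p,d] = ∫_{S^{d-1}} max_{1 ≤ i ≤ p} |x_i| dσ_d(x)`. -/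
noncomputable def E_DS (p d : ℕ) : ℝ :=
  ∫ x : Metric.sphere (0 : EuclideanSpace ℝ (Fin d)) 1,
    (⨆ (i : Fin d) (_ : (i : ℕ) < p), |(x : EuclideanSpace ℝ (Fin d)) i|)
    ∂(sphereUniform d)



section Aux
variable {d : ℕ} [NeZero d]

lemma iSup_cond_eq_sup' (P : Fin d → Prop) [DecidablePred P] (a : Fin d → ℝ) :
    (⨆ (i : Fin d) (_ : P i), a i)
      = Finset.univ.sup' Finset.univ_nonempty (fun i => if P i then a i else 0) := by
  rw [Finset.sup'_univ_eq_ciSup]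
  congr 1
  funext i
  by_cases h : P i
  · rw [ciSup_pos h, if_pos h]
  · rw [if_neg h]
    haveI : IsEmpty (P i) := ⟨fun hp => h hp⟩
    exact Real.iSup_of_isEmpty _

lemma sup'_if_eq_filter (P : Fin d → Prop) [DecidablePred P] (a : Fin d → ℝ)
    (ha : ∀ i, 0 ≤ a i) (hne : (Finset.univ.filter P).Nonempty) :
    Finset.univ.sup' Finset.univ_nonempty (fun i => if P i then a i else 0)
      = (Finset.univ.filter P).sup' hne a := by
  apply le_antisymm
  · refine Finset.sup'_le _ _ fun i _ => ?_
    by_cases h : P i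
    · rw [if_pos h]
      exact Finset.le_sup' a (Finset.mem_filter.mpr ⟨Finset.mem_univ i, h⟩)
    · rw [if_neg h]
      obtain ⟨j, hj⟩ := hne
      exact le_trans (ha j) (Finset.le_sup' a hj)
  · refine Finset.sup'_le _ _ fun i hi => ?_
    have hPi := (Finset.mem_filter.mp hi).2
    calc a i = if P i then a i else 0 := by rw [if_pos hPi]
    _ ≤ _ := Finset.le_sup' (fun i => if P i then a i else 0) (Finset.mem_univ i)

lemma sup'_comp_equiv (e : Fin d ≃ Fin d) (f : Fin d → ℝ) :
    Finset.univ.sup' Finset.univ_nonempty (fun i => f (e i))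
      = Finset.univ.sup' Finset.univ_nonempty f := by
  apply le_antisymm
  · exact Finset.sup'_le _ _ fun i _ => Finset.le_sup' f (Finset.mem_univ (e i))
  · refine Finset.sup'_le _ _ fun i _ => ?_
    have h : f i = f (e (e.symm i)) := by rw [e.apply_symm_apply]
    rw [h]
    exact Finset.le_sup' (fun i => f (e i)) (Finset.mem_univ (e.symm i))

lemma key_sum_le (a : Fin d → ℝ) (ha : ∀ i, 0 ≤ a i) (S : Finset (Fin d)) (hS : S.Nonempty)
    (hE : ∀ j, (S.erase j).Nonempty) :
    ((S.card : ℝ) - 1) * S.sup' hS a ≤ ∑ j ∈ S, (S.erase j).sup' (hE j) a := by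
  obtain ⟨m, hmS, hm⟩ := Finset.exists_mem_eq_sup' hS a
  rw [← Finset.add_sum_erase S _ hmS]
  have h2 : 0 ≤ (S.erase m).sup' (hE m) a := by
    obtain ⟨k, hk⟩ := hE m
    exact le_trans (ha k) (Finset.le_sup' a hk)
  have h3 : ((S.card : ℝ) - 1) * S.sup' hS a
      ≤ ∑ j ∈ S.erase m, (S.erase j).sup' (hE j) a := by
    have hb := Finset.card_nsmul_le_sum (S.erase m)
      (fun j => (S.erase j).sup' (hE j) a) (S.sup' hS a) ?_
    · have hcard : (S.erase m).card = S.card - 1 := Finset.card_erase_of_mem hmS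
      have h1c : 1 ≤ S.card := Finset.one_le_card.mpr hS
      rw [hcard, nsmul_eq_mul, Nat.cast_sub h1c, Nat.cast_one] at hb
      exact hb
    · intro j hj
      rw [hm]
      have hmj : m ∈ S.erase j :=
        Finset.mem_erase.mpr ⟨Ne.symm (Finset.mem_erase.mp hj).1, hmS⟩
      exact Finset.le_sup' a hmj
  linarith

lemma key_sum_lt (a : Fin d → ℝ) (ha : ∀ i, 0 ≤ a i) (S : Finset (Fin d)) (hS : S.Nonempty)
    (hE : ∀ j, (S.erase j).Nonempty)
    (i0 i1 : Fin d) (h01 : i0 ≠ i1) (h0 : i0 ∈ S) (h1 : i1 ∈ S)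
    (ha0 : 0 < a i0) (ha1 : 0 < a i1) :
    ((S.card : ℝ) - 1) * S.sup' hS a < ∑ j ∈ S, (S.erase j).sup' (hE j) a := by
  obtain ⟨m, hmS, hm⟩ := Finset.exists_mem_eq_sup' hS a
  rw [← Finset.add_sum_erase S _ hmS]
  have h2 : 0 < (S.erase m).sup' (hE m) a := by
    rcases eq_or_ne i0 m with rfl | h
    · exact lt_of_lt_of_le ha1 (Finset.le_sup' a (Finset.mem_erase.mpr ⟨Ne.symm h01, h1⟩))
    · exact lt_of_lt_of_le ha0 (Finset.le_sup' a (Finset.mem_erase.mpr ⟨h, h0⟩))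
  have h3 : ((S.card : ℝ) - 1) * S.sup' hS a
      ≤ ∑ j ∈ S.erase m, (S.erase j).sup' (hE j) a := by
    have hb := Finset.card_nsmul_le_sum (S.erase m)
      (fun j => (S.erase j).sup' (hE j) a) (S.sup' hS a) ?_
    · have hcard : (S.erase m).card = S.card - 1 := Finset.card_erase_of_mem hmS
      have h1c : 1 ≤ S.card := Finset.one_le_card.mpr hS
      rw [hcard, nsmul_eq_mul, Nat.cast_sub h1c, Nat.cast_one] at hb
      exact hb
    · intro j hj
      rw [hm]
      have hmj : m ∈ S.erase j :=
        Finset.mem_erase.mpr ⟨Ne.symm (Finset.mem_erase.mp hj).1, hmS⟩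
      exact Finset.le_sup' a hmj
  linarith

lemma card_filter_lt {k : ℕ} (hk : k ≤ d) :
    (Finset.univ.filter (fun i : Fin d => (i : ℕ) < k)).card = k := by
  have h := Finset.card_bij' (s := Finset.univ.filter (fun i : Fin d => (i : ℕ) < k))
    (t := Finset.range k) (fun i _ => (i : ℕ))
    (fun a ha => ⟨a, lt_of_lt_of_le (Finset.mem_range.mp ha) hk⟩)
    (fun i hi => Finset.mem_range.mpr (Finset.mem_filter.mp hi).2)
    (fun a ha => by
      simp only [Finset.mem_filter, Finset.mem_univ, true_and]
      exact Finset.mem_range.mp ha)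
    (fun i hi => rfl) (fun a ha => rfl)
  rw [h, Finset.card_range]

end Aux

section Meas
variable {d : ℕ}

/-- The map induced on the unit sphere by a linear isometry equivalence. -/
noncomputable def sphereMap (T : EuclideanSpace ℝ (Fin d) ≃ₗᵢ[ℝ] EuclideanSpace ℝ (Fin d))
    (x : Metric.sphere (0 : EuclideanSpace ℝ (Fin d)) 1) :
    Metric.sphere (0 : EuclideanSpace ℝ (Fin d)) 1 :=
  ⟨T x, by
    rw [mem_sphere_zero_iff_norm, T.norm_map]
    exact mem_sphere_zero_iff_norm.mp x.2⟩

lemma continuous_sphereMap (T : EuclideanSpace ℝ (Fin d) ≃ₗᵢ[ℝ] EuclideanSpace ℝ (Fin d)) :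
    Continuous (sphereMap T) :=
  (T.continuous.comp continuous_subtype_val).subtype_mk _

lemma map_sphereMap_toSphere (T : EuclideanSpace ℝ (Fin d) ≃ₗᵢ[ℝ] EuclideanSpace ℝ (Fin d)) :
    Measure.map (sphereMap T)
        (volume : Measure (EuclideanSpace ℝ (Fin d))).toSphere
      = (volume : Measure (EuclideanSpace ℝ (Fin d))).toSphere := by
  have hpre : ∀ C : Set (EuclideanSpace ℝ (Fin d)), ⇑T.symm '' C = ⇑T ⁻¹' C := by
    intro C
    ext y
    constructor
    · rintro ⟨b, hb, rfl⟩
      simpa using hb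
    · intro hy
      exact ⟨T y, hy, T.symm_apply_apply y⟩
  apply Measure.ext
  intro s hs
  rw [Measure.map_apply (continuous_sphereMap T).measurable hs]
  rw [Measure.toSphere_apply' _ ((continuous_sphereMap T).measurable hs),
    Measure.toSphere_apply' _ hs]
  congr 1
  have himg : (Subtype.val '' (sphereMap T ⁻¹' s))
      = ⇑T.symm '' (Subtype.val '' s) := by
    ext y
    constructor
    · rintro ⟨x, hx, rfl⟩
      exact ⟨T ↑x, ⟨sphereMap T x, hx, rfl⟩, T.symm_apply_apply _⟩
    · rintro ⟨z, ⟨w, hw, rfl⟩, rfl⟩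
      refine ⟨⟨T.symm ↑w, ?_⟩, ?_, rfl⟩
      · rw [mem_sphere_zero_iff_norm, T.symm.norm_map]
        exact mem_sphere_zero_iff_norm.mp w.2
      · have hTs : sphereMap T ⟨T.symm ↑w, by
          rw [mem_sphere_zero_iff_norm, T.symm.norm_map]
          exact mem_sphere_zero_iff_norm.mp w.2⟩ = w := by
          apply Subtype.ext
          exact T.apply_symm_apply ↑w
        show sphereMap T _ ∈ s
        rw [hTs]
        exact hw
  rw [himg]
  have hsmul : Set.Ioo (0:ℝ) 1 • (⇑T.symm '' (Subtype.val '' s))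
      = ⇑T.symm '' (Set.Ioo (0:ℝ) 1 • (Subtype.val '' s)) := by
    rw [← Set.image2_smul, ← Set.image2_smul, Set.image2_image_right, Set.image_image2]
    exact Set.image2_congr fun a _ b _ => (T.symm.map_smul a b).symm
  rw [hsmul, hpre]
  exact T.measurePreserving.measure_preimage_emb T.toHomeomorph.measurableEmbedding _

lemma toSphere_coord_zero (hd : 0 < d) (i : Fin d) :
    (volume : Measure (EuclideanSpace ℝ (Fin d))).toSphere
      {x : Metric.sphere (0 : EuclideanSpace ℝ (Fin d)) 1 |
        (x : EuclideanSpace ℝ (Fin d)) i = 0} = 0 := by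
  have hcont : Continuous
      (fun x : Metric.sphere (0 : EuclideanSpace ℝ (Fin d)) 1 =>
        (x : EuclideanSpace ℝ (Fin d)) i) :=
    ((EuclideanSpace.proj i).continuous.comp continuous_subtype_val : _)
  have hmeas : MeasurableSet {x : Metric.sphere (0 : EuclideanSpace ℝ (Fin d)) 1 |
      (x : EuclideanSpace ℝ (Fin d)) i = 0} :=
    measurableSet_eq_fun hcont.measurable measurable_const
  rw [Measure.toSphere_apply' _ hmeas]
  refine mul_eq_zero_of_right _ (measure_mono_null ?_
    (Measure.addHaar_submodule _
      (LinearMap.ker ((EuclideanSpace.proj i : EuclideanSpace ℝ (Fin d) →L[ℝ] ℝ) : EuclideanSpace ℝ (Fin d) →ₗ[ℝ] ℝ)) ?_))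
  · rintro y hy
    obtain ⟨r, hr, z, hz, rfl⟩ := Set.mem_smul.mp hy
    obtain ⟨x, hx, rfl⟩ := hz
    have hxi : (x : EuclideanSpace ℝ (Fin d)) i = 0 := hx
    show r • (x : EuclideanSpace ℝ (Fin d)) ∈
      (LinearMap.ker ((EuclideanSpace.proj i : EuclideanSpace ℝ (Fin d) →L[ℝ] ℝ) : EuclideanSpace ℝ (Fin d) →ₗ[ℝ] ℝ) :
        Set (EuclideanSpace ℝ (Fin d)))
    simp only [SetLike.mem_coe, LinearMap.mem_ker]
    show (EuclideanSpace.proj i) (r • (x : EuclideanSpace ℝ (Fin d))) = 0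
    rw [_root_.map_smul]
    simp [PiLp.proj_apply, hxi]
  · intro h
    have h1 : EuclideanSpace.single i (1:ℝ) ∈
        LinearMap.ker ((EuclideanSpace.proj i : EuclideanSpace ℝ (Fin d) →L[ℝ] ℝ) : EuclideanSpace ℝ (Fin d) →ₗ[ℝ] ℝ) := by
      rw [h]; exact Submodule.mem_top
    rw [LinearMap.mem_ker] at h1
    simp [PiLp.proj_apply, EuclideanSpace.single_apply] at h1

lemma toSphere_univ_ne_zero (hd : 0 < d) :
    (volume : Measure (EuclideanSpace ℝ (Fin d))).toSphere Set.univ ≠ 0 := by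
  rw [Measure.toSphere_apply_univ]
  refine mul_ne_zero ?_ ?_
  · rw [finrank_euclideanSpace_fin]
    exact_mod_cast hd.ne'
  · exact (Metric.measure_ball_pos volume 0 one_pos).ne'

lemma toSphere_univ_ne_top :
    (volume : Measure (EuclideanSpace ℝ (Fin d))).toSphere Set.univ ≠ ⊤ :=
  (measure_lt_top _ _).ne

end Meas
abbrev Sph (d : ℕ) := Metric.sphere (0 : EuclideanSpace ℝ (Fin d)) 1

section SU

lemma continuous_sup'' {X : Type*} [TopologicalSpace X] {ι : Type*} (s : Finset ι)
    (hs : s.Nonempty) (f : ι → X → ℝ) (hf : ∀ i, Continuous (f i)) :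
    Continuous (fun x => s.sup' hs (fun i => f i x)) := by
  induction hs using Finset.Nonempty.cons_induction with
  | singleton i => simpa using hf i
  | cons i s hi hs ih =>
      simp only [Finset.sup'_cons hs]
      exact (hf i).max ih

variable {d : ℕ}

lemma map_sphereMap_sphereUniform (T : EuclideanSpace ℝ (Fin d) ≃ₗᵢ[ℝ] EuclideanSpace ℝ (Fin d)) :
    Measure.map (sphereMap T) (sphereUniform d) = sphereUniform d := by
  rw [sphereUniform, Measure.map_smul, map_sphereMap_toSphere]

lemma integral_comp_sphereMap (T : EuclideanSpace ℝ (Fin d) ≃ₗᵢ[ℝ] EuclideanSpace ℝ (Fin d))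
    (f : Metric.sphere (0 : EuclideanSpace ℝ (Fin d)) 1 → ℝ)
    (hf : AEStronglyMeasurable f (sphereUniform d)) :
    ∫ x, f (sphereMap T x) ∂(sphereUniform d) = ∫ x, f x ∂(sphereUniform d) := by
  have hf' : AEStronglyMeasurable f (Measure.map (sphereMap T) (sphereUniform d)) := by
    rw [map_sphereMap_sphereUniform]; exact hf
  conv_rhs => rw [← map_sphereMap_sphereUniform T]
  rw [integral_map (continuous_sphereMap T).aemeasurable hf']

lemma sphereUniform_univ (hd : 0 < d) : sphereUniform d Set.univ = 1 := by
  rw [sphereUniform, Measure.smul_apply, smul_eq_mul]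
  exact ENNReal.inv_mul_cancel (toSphere_univ_ne_zero hd) toSphere_univ_ne_top

lemma sphereUniform_isFiniteMeasure (hd : 0 < d) : IsFiniteMeasure (sphereUniform d) :=
  ⟨by rw [sphereUniform_univ hd]; exact ENNReal.one_lt_top⟩

lemma sphereUniform_coord_zero (hd : 0 < d) (i : Fin d) :
    sphereUniform d {x : Metric.sphere (0 : EuclideanSpace ℝ (Fin d)) 1 |
      (x : EuclideanSpace ℝ (Fin d)) i = 0} = 0 := by
  rw [sphereUniform, Measure.smul_apply, toSphere_coord_zero hd i, smul_zero]

lemma swap_cond_iff {p : ℕ} (hpd : p < d) (j : Fin d) (hj : (j : ℕ) < p + 1) (k : Fin d) :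
    ((Equiv.swap j (⟨p, hpd⟩ : Fin d) k : Fin d) : ℕ) < p ↔ ((k : ℕ) < p + 1 ∧ k ≠ j) := by
  by_cases hkj : k = j
  · subst hkj
    rw [Equiv.swap_apply_left]
    simp [show ((⟨p, hpd⟩ : Fin d) : ℕ) = p from rfl]
  · by_cases hkq : k = (⟨p, hpd⟩ : Fin d)
    · subst hkq
      rw [Equiv.swap_apply_right]
      constructor
      · intro h
        refine ⟨by exact Nat.lt_succ_self p, fun he => ?_⟩
        have h2 := congrArg Fin.val he
        simp at h2
        omega
      · rintro ⟨-, hne⟩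
        have hj' : (j : ℕ) ≠ p := by
          intro h
          apply hne
          apply Fin.ext
          simpa using h.symm
        omega
    · rw [Equiv.swap_apply_of_ne_of_ne hkj hkq]
      have hkp : (k : ℕ) ≠ p := by
        intro h
        apply hkq
        apply Fin.ext
        simpa using h
      constructor
      · intro h
        exact ⟨by omega, hkj⟩
      · rintro ⟨h1, -⟩
        omega

end SU

/-- The direct-search expected decrease per function evaluation is
strictly decreasing in the subspace dimension: for `d > 1` and `1 ≤ p ≤ d - 1`,
`E_DS[p,d]/(2p) > E_DS[p+1,d]/(2(p+1))`. -/
theorem E_DS_per_evaluation_decreasing (d p : ℕ) (hd : 1 < d)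
    (hp : 1 ≤ p) (hpd : p ≤ d - 1) :
    E_DS p d / (2 * (p : ℝ)) > E_DS (p + 1) d / (2 * ((p : ℝ) + 1)) := by
  haveI : NeZero d := ⟨by omega⟩
  have hdpos : 0 < d := by omega
  have hp1d : p + 1 ≤ d := by omega
  have hpd' : p < d := by omega
  set σ := sphereUniform d with hσ
  haveI hσfin : IsFiniteMeasure σ := sphereUniform_isFiniteMeasure hdpos
  -- the max functions
  set F : ℕ → Sph d → ℝ := fun q x =>
    ⨆ (i : Fin d) (_ : (i : ℕ) < q), |(x : EuclideanSpace ℝ (Fin d)) i| with hF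
  set G : Fin d → Sph d → ℝ := fun j x =>
    Finset.univ.sup' Finset.univ_nonempty
      (fun i : Fin d => if ((i : ℕ) < p + 1 ∧ i ≠ j) then |(x : EuclideanSpace ℝ (Fin d)) i| else 0)
    with hG
  have hEDS : ∀ q, E_DS q d = ∫ x, F q x ∂σ := by
    intro q
    rw [hF, hσ]
    rfl
  -- continuity and integrability
  have habs : ∀ i : Fin d, Continuous (fun x : Sph d => |(x : EuclideanSpace ℝ (Fin d)) i|) :=
    fun i => (((EuclideanSpace.proj i).continuous.comp continuous_subtype_val)).abs
  have hcont_if : ∀ P : Fin d → Prop, ∀ inst : DecidablePred P, Continuous (fun x : Sph d =>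
      Finset.univ.sup' Finset.univ_nonempty
        (fun i : Fin d => if P i then |(x : EuclideanSpace ℝ (Fin d)) i| else 0)) := by
    intro P inst
    refine continuous_sup'' _ _ _ fun i => ?_
    by_cases h : P i
    · simpa [h] using habs i
    · simp only [if_neg h]
      exact continuous_const
  have hcontF : ∀ q, Continuous (F q) := by
    intro q
    have : F q = fun x : Sph d => Finset.univ.sup' Finset.univ_nonempty
        (fun i : Fin d => if (i : ℕ) < q then |(x : EuclideanSpace ℝ (Fin d)) i| else 0) :=
      funext fun x => iSup_cond_eq_sup' _ _
    rw [this]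
    exact hcont_if _ _
  have hcontG : ∀ j, Continuous (G j) := fun j => hcont_if _ _
  have hint : ∀ f : Sph d → ℝ, Continuous f → Integrable f σ := fun f hf =>
    hf.integrable_of_hasCompactSupport (HasCompactSupport.of_compactSpace f)
  -- the index set
  set S : Finset (Fin d) := Finset.univ.filter (fun i => (i : ℕ) < p + 1) with hS
  have hScard : S.card = p + 1 := card_filter_lt hp1d
  have hSne : S.Nonempty := Finset.card_pos.mp (by rw [hScard]; omega)
  have hEne : ∀ j, (S.erase j).Nonempty := by
    intro j
    have h1 := Finset.pred_card_le_card_erase (s := S) (a := j)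
    rw [hScard] at h1
    exact Finset.card_pos.mp (by omega)
  -- pointwise identifications
  have hFp1 : ∀ x : Sph d, F (p + 1) x =
      S.sup' hSne (fun i => |(x : EuclideanSpace ℝ (Fin d)) i|) := by
    intro x
    have hFx : F (p + 1) x
        = ⨆ (i : Fin d) (_ : (i : ℕ) < p + 1), |(x : EuclideanSpace ℝ (Fin d)) i| := rfl
    rw [hFx]
    rw [iSup_cond_eq_sup' (fun i : Fin d => (i : ℕ) < p + 1)
      (fun i => |(x : EuclideanSpace ℝ (Fin d)) i|)]
    exact sup'_if_eq_filter _ _ (fun i => abs_nonneg _) _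
  have hGj : ∀ x : Sph d, ∀ j ∈ S, G j x =
      (S.erase j).sup' (hEne j) (fun i => |(x : EuclideanSpace ℝ (Fin d)) i|) := by
    intro x j _
    have hset : Finset.univ.filter (fun i : Fin d => (i : ℕ) < p + 1 ∧ i ≠ j)
        = S.erase j := by
      ext i
      simp only [Finset.mem_filter, Finset.mem_univ, true_and, Finset.mem_erase, hS]
      tauto
    have hGx : G j x = Finset.univ.sup' Finset.univ_nonempty
        (fun i : Fin d => if ((i : ℕ) < p + 1 ∧ i ≠ j)
          then |(x : EuclideanSpace ℝ (Fin d)) i| else 0) := rfl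
    rw [hGx]
    have hne' : (Finset.univ.filter (fun i : Fin d => (i : ℕ) < p + 1 ∧ i ≠ j)).Nonempty := by
      rw [hset]; exact hEne j
    rw [sup'_if_eq_filter _ _ (fun i => abs_nonneg _) hne']
    exact Finset.sup'_congr _ hset (fun _ _ => rfl)
  -- exchangeability : ∫ G j = ∫ F p for j ∈ S
  have hGint : ∀ j ∈ S, ∫ x, G j x ∂σ = ∫ x, F p x ∂σ := by
    intro j hjS
    have hj : (j : ℕ) < p + 1 := (Finset.mem_filter.mp hjS).2
    set e : Fin d ≃ Fin d := Equiv.swap j (⟨p, hpd'⟩ : Fin d) with he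
    set T := LinearIsometryEquiv.piLpCongrLeft 2 ℝ ℝ e with hT
    have hcoord : ∀ (x : Sph d) (k : Fin d),
        ((sphereMap T x : EuclideanSpace ℝ (Fin d))) k
          = (x : EuclideanSpace ℝ (Fin d)) (e k) := by
      intro x k
      show (T (x : EuclideanSpace ℝ (Fin d))) k = _
      rw [hT, LinearIsometryEquiv.piLpCongrLeft_apply, Equiv.piCongrLeft'_apply, he,
        Equiv.symm_swap]
    have hcomp : ∀ x : Sph d, F p (sphereMap T x) = G j x := by
      intro x
      have hGx : G j x = Finset.univ.sup' Finset.univ_nonempty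
          (fun i : Fin d => if ((i : ℕ) < p + 1 ∧ i ≠ j)
            then |(x : EuclideanSpace ℝ (Fin d)) i| else 0) := rfl
      have h1 : F p (sphereMap T x)
          = Finset.univ.sup' Finset.univ_nonempty
              (fun i : Fin d => if (i : ℕ) < p
                then |(x : EuclideanSpace ℝ (Fin d)) (e i)| else 0) := by
        have hFx : F p (sphereMap T x)
            = ⨆ (i : Fin d) (_ : (i : ℕ) < p),
                |(sphereMap T x : EuclideanSpace ℝ (Fin d)) i| := rfl
        rw [hFx]
        simp only [hcoord x]
        exact iSup_cond_eq_sup' (fun i : Fin d => (i : ℕ) < p)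
          (fun i => |(x : EuclideanSpace ℝ (Fin d)) (e i)|)
      have h2 : (fun i : Fin d => if (i : ℕ) < p
            then |(x : EuclideanSpace ℝ (Fin d)) (e i)| else 0)
          = (fun i : Fin d => (fun k : Fin d => if ((e k : Fin d) : ℕ) < p
              then |(x : EuclideanSpace ℝ (Fin d)) k| else 0) (e i)) := by
        funext i
        simp only
        rw [he, Equiv.swap_apply_self]
      have h3 := sup'_comp_equiv (e := e)
        (f := fun k : Fin d => if ((e k : Fin d) : ℕ) < p
          then |(x : EuclideanSpace ℝ (Fin d)) k| else 0)
      have h4 : (fun k : Fin d => if ((e k : Fin d) : ℕ) < p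
            then |(x : EuclideanSpace ℝ (Fin d)) k| else 0)
          = (fun k : Fin d => if ((k : ℕ) < p + 1 ∧ k ≠ j)
            then |(x : EuclideanSpace ℝ (Fin d)) k| else 0) := by
        funext k
        by_cases hk : ((k : ℕ) < p + 1 ∧ k ≠ j)
        · rw [if_pos (by rw [he]; exact (swap_cond_iff hpd' j hj k).mpr hk), if_pos hk]
        · rw [if_neg (fun h => hk ((swap_cond_iff hpd' j hj k).mp (he ▸ h))), if_neg hk]
      rw [h1, h2, h3, h4]
    calc ∫ x, G j x ∂σ = ∫ x, F p (sphereMap T x) ∂σ := by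
          refine integral_congr_ae (Filter.Eventually.of_forall fun x => ?_)
          exact (hcomp x).symm
      _ = ∫ x, F p x ∂σ := integral_comp_sphereMap T (F p) (hcontF p).aestronglyMeasurable
  -- the positive-measure set where the inequality is strict
  set i0 : Fin d := ⟨0, by omega⟩ with hi0
  set i1 : Fin d := ⟨1, by omega⟩ with hi1
  have hi01 : i0 ≠ i1 := by
    rw [hi0, hi1]
    simp [Fin.ext_iff]
  have hi0S : i0 ∈ S := by
    rw [hS]
    refine Finset.mem_filter.mpr ⟨Finset.mem_univ _, ?_⟩
    rw [hi0]
    exact Nat.succ_pos p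
  have hi1S : i1 ∈ S := by
    rw [hS]
    refine Finset.mem_filter.mpr ⟨Finset.mem_univ _, ?_⟩
    rw [hi1]
    show 1 < p + 1
    omega
  set good : Set (Sph d) := {x : Sph d | (x : EuclideanSpace ℝ (Fin d)) i0 ≠ 0
    ∧ (x : EuclideanSpace ℝ (Fin d)) i1 ≠ 0} with hgood
  have hgood_pos : 0 < σ good := by
    have hcompl : σ goodᶜ = 0 := by
      have hsub : goodᶜ ⊆ {x : Sph d | (x : EuclideanSpace ℝ (Fin d)) i0 = 0}
          ∪ {x : Sph d | (x : EuclideanSpace ℝ (Fin d)) i1 = 0} := by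
        intro x hx
        simp only [hgood, Set.mem_compl_iff, Set.mem_setOf_eq, not_and_or, not_not] at hx
        exact hx
      refine measure_mono_null hsub ?_
      refine le_antisymm (le_trans (measure_union_le _ _) ?_) zero_le
      rw [sphereUniform_coord_zero hdpos i0, sphereUniform_coord_zero hdpos i1, add_zero]
    have huniv : σ Set.univ = 1 := sphereUniform_univ hdpos
    have hle : σ Set.univ ≤ σ good + σ goodᶜ := by
      calc σ Set.univ = σ (good ∪ goodᶜ) := by rw [Set.union_compl_self]
        _ ≤ σ good + σ goodᶜ := measure_union_le _ _
    rw [hcompl, add_zero, huniv] at hle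
    exact lt_of_lt_of_le zero_lt_one hle
  -- pointwise inequalities
  have hcast : ((S.card : ℝ) - 1) = (p : ℝ) := by
    rw [hScard]; push_cast; ring
  have hHle : ∀ x : Sph d, (p : ℝ) * F (p + 1) x ≤ ∑ j ∈ S, G j x := by
    intro x
    have hkey := key_sum_le (fun i => |(x : EuclideanSpace ℝ (Fin d)) i|)
      (fun i => abs_nonneg _) S hSne hEne
    rw [hcast] at hkey
    rw [hFp1 x]
    calc (p : ℝ) * S.sup' hSne (fun i => |(x : EuclideanSpace ℝ (Fin d)) i|)
        ≤ ∑ j ∈ S, (S.erase j).sup' (hEne j)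
            (fun i => |(x : EuclideanSpace ℝ (Fin d)) i|) := hkey
      _ = ∑ j ∈ S, G j x := (Finset.sum_congr rfl fun j hj => (hGj x j hj).symm)
  have hHlt : ∀ x ∈ good, (p : ℝ) * F (p + 1) x < ∑ j ∈ S, G j x := by
    intro x hx
    rw [hgood, Set.mem_setOf_eq] at hx
    obtain ⟨hx0, hx1⟩ := hx
    have hkey := key_sum_lt (fun i => |(x : EuclideanSpace ℝ (Fin d)) i|)
      (fun i => abs_nonneg _) S hSne hEne i0 i1 hi01 hi0S hi1S
      (abs_pos.mpr hx0) (abs_pos.mpr hx1)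
    rw [hcast] at hkey
    rw [hFp1 x]
    calc (p : ℝ) * S.sup' hSne (fun i => |(x : EuclideanSpace ℝ (Fin d)) i|)
        < ∑ j ∈ S, (S.erase j).sup' (hEne j)
            (fun i => |(x : EuclideanSpace ℝ (Fin d)) i|) := hkey
      _ = ∑ j ∈ S, G j x := (Finset.sum_congr rfl fun j hj => (hGj x j hj).symm)
  -- integrate
  set H : Sph d → ℝ := fun x => (∑ j ∈ S, G j x) - (p : ℝ) * F (p + 1) x with hH
  have hintG : ∀ j ∈ S, Integrable (G j) σ := fun j _ => hint _ (hcontG j)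
  have hintSum : Integrable (fun x => ∑ j ∈ S, G j x) σ :=
    integrable_finset_sum S (fun j hj => hintG j hj)
  have hintF1 : Integrable (fun x => (p : ℝ) * F (p + 1) x) σ :=
    (hint _ (hcontF (p + 1))).const_mul _
  have hintH : Integrable H σ := hintSum.sub hintF1
  have hIH : ∫ x, H x ∂σ
      = ((p : ℝ) + 1) * (∫ x, F p x ∂σ) - (p : ℝ) * ∫ x, F (p + 1) x ∂σ := by
    rw [hH]
    rw [integral_sub hintSum hintF1, integral_finset_sum S (fun j hj => hintG j hj),
      integral_const_mul]
    congr 1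
    rw [Finset.sum_congr rfl (fun j hj => hGint j hj), Finset.sum_const, hScard,
      nsmul_eq_mul]
    push_cast
    ring
  have hHpos : 0 < ∫ x, H x ∂σ := by
    refine (integral_pos_iff_support_of_nonneg_ae
      (Filter.Eventually.of_forall fun x => sub_nonneg.mpr (hHle x)) hintH).mpr ?_
    refine lt_of_lt_of_le hgood_pos (measure_mono fun x hx => ?_)
    exact Function.mem_support.mpr (ne_of_gt (sub_pos.mpr (hHlt x hx)))
  have hfinal : (p : ℝ) * E_DS (p + 1) d < ((p : ℝ) + 1) * E_DS p d := by
    rw [hEDS p, hEDS (p + 1)]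
    linarith [hIH ▸ hHpos]
  have hp' : (0 : ℝ) < p := by exact_mod_cast hp
  rw [gt_iff_lt, div_lt_div_iff₀ (by linarith) (by linarith)]
  nlinarith [hfinal]
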